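/- Let ⟨A,→1⟩ and ⟨A,→2⟩ be ARSs and ∼ an equivalence relation on A such that NF(→2) ⊆ NF(→1) and →2 ⊆ (→1/∼)⁺. If →1 is complete modulo ∼ (terminating modulo ∼ and Church–Rosser modulo ∼), then →2 is complete modulo ∼ and normalization equivalent modulo ∼ to →1. -/

import Mathlib

/-- Normal forms of a binary relation. -/
def NF {A : Type} (r : A → A → Prop) (a : A) : Prop := ∀ b, ¬ r a b

/-- Conversion modulo an equivalence `sim`: sequences of `step`, `step⁻¹`
and `sim` steps. -/
def Conv {A : Type} (step sim : A → A → Prop) : A → A → Prop :=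
  Relation.ReflTransGen (fun a b => step a b ∨ step b a ∨ sim a b)

/-- A valley modulo `sim`: `step* · sim · (step⁻¹)*`. -/
def ValleyMod {A : Type} (step sim : A → A → Prop) (a b : A) : Prop :=
  ∃ c d, Relation.ReflTransGen step a c ∧ sim c d ∧ Relation.ReflTransGen step b d

/-- Church–Rosser modulo `sim`: every conversion is a valley modulo `sim`. -/
def ChurchRosserModulo {A : Type} (step sim : A → A → Prop) : Prop :=
  ∀ a b, Conv step sim a b → ValleyMod step sim a b

/-- Rewriting modulo: `∼ · r · ∼`. -/
def RelMod {A : Type} (r sim : A → A → Prop) (a b : A) : Prop :=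
  ∃ c d, sim a c ∧ r c d ∧ sim d b

section Helpers
variable {A : Type} {r1 r2 sim : A → A → Prop}

lemma nf_eq_of_rtg {s : A → A → Prop} {a c : A}
    (h : Relation.ReflTransGen s a c) (hnf : NF s a) : c = a := by
  induction h with
  | refl => rfl
  | tail _ h2 ih => subst ih; exact absurd h2 (hnf _)

lemma nf_exists {s : A → A → Prop} (wf : WellFounded (fun a b => s b a)) (a : A) :
    ∃ c, Relation.ReflTransGen s a c ∧ NF s c := by
  induction a using WellFounded.induction wf with
  | _ a ih => ?_
  by_cases h : ∃ b, s a b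
  · obtain ⟨b, hb⟩ := h
    obtain ⟨c, h1, h2⟩ := ih b hb
    exact ⟨c, Relation.ReflTransGen.head hb h1, h2⟩
  · exact ⟨a, .refl, fun b hb => h ⟨b, hb⟩⟩

lemma conv_symm (hsim : Equivalence sim) {s : A → A → Prop} {a b : A}
    (h : Conv s sim a b) : Conv s sim b a := by
  induction h with
  | refl => exact .refl
  | tail _ hbc ih =>
    refine Relation.ReflTransGen.trans ?_ ih
    rcases hbc with h | h | h
    · exact .single (Or.inr (Or.inl h))
    · exact .single (Or.inl h)
    · exact .single (Or.inr (Or.inr (hsim.symm h)))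

lemma conv_of_rtg {s : A → A → Prop} {a b : A}
    (h : Relation.ReflTransGen s a b) : Conv s sim a b :=
  Relation.ReflTransGen.mono (fun _ _ h => Or.inl h) _ _ h

lemma conv_of_sim {s : A → A → Prop} {a b : A} (h : sim a b) : Conv s sim a b :=
  .single (Or.inr (Or.inr h))

lemma conv_of_step {s : A → A → Prop} {a b : A} (h : s a b) : Conv s sim a b :=
  .single (Or.inl h)

lemma conv_of_relmod {a b : A} (h : RelMod r1 sim a b) : Conv r1 sim a b := by
  obtain ⟨c, d, h1, h2, h3⟩ := h
  exact ((conv_of_sim h1).trans (conv_of_step h2)).trans (conv_of_sim h3)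

lemma conv_of_tg_relmod {a b : A}
    (h : Relation.TransGen (RelMod r1 sim) a b) : Conv r1 sim a b := by
  induction h with
  | single h => exact conv_of_relmod h
  | tail _ h2 ih => exact ih.trans (conv_of_relmod h2)

lemma sim_tg (hsim : Equivalence sim) {a c b : A} (h1 : sim a c)
    (h2 : Relation.TransGen (RelMod r1 sim) c b) :
    Relation.TransGen (RelMod r1 sim) a b := by
  induction h2 with
  | single h =>
    obtain ⟨u, v, h3, h4, h5⟩ := h
    exact .single ⟨u, v, hsim.trans h1 h3, h4, h5⟩
  | tail _ h2 ih => exact ih.tail h2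

lemma tg_sim (hsim : Equivalence sim) {a c b : A}
    (h2 : Relation.TransGen (RelMod r1 sim) a b) (h1 : sim b c) :
    Relation.TransGen (RelMod r1 sim) a c := by
  obtain ⟨u, hau, hub⟩ := Relation.TransGen.tail'_iff.mp h2
  obtain ⟨x, y, h3, h4, h5⟩ := hub
  exact Relation.TransGen.tail' hau ⟨x, y, h3, h4, hsim.trans h5 h1⟩

end Helpers

/-- If `NF(→₂) ⊆ NF(→₁)`, `→₂ ⊆ (→₁/∼)⁺` and `→₁` is complete modulo `∼`,
then `→₂` is complete modulo `∼` and normalization equivalent modulo `∼`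
to `→₁`. -/
theorem stmt8 {A : Type} (r1 r2 sim : A → A → Prop) (hsim : Equivalence sim)
    (hnf : ∀ a, NF r2 a → NF r1 a)
    (hsub : ∀ a b, r2 a b → Relation.TransGen (RelMod r1 sim) a b)
    (hterm1 : WellFounded (fun a b => RelMod r1 sim b a))
    (hcr1 : ChurchRosserModulo r1 sim) :
    (WellFounded (fun a b => RelMod r2 sim b a) ∧ ChurchRosserModulo r2 sim) ∧
    (∀ a b,
      (∃ c, Relation.ReflTransGen r1 a c ∧ NF r1 c ∧ sim c b) ↔
      (∃ c, Relation.ReflTransGen r2 a c ∧ NF r2 c ∧ sim c b)) := by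
  have wfTG : WellFounded (fun a b => Relation.TransGen (RelMod r1 sim) b a) :=
    Subrelation.wf (fun {a b} h => Relation.transGen_swap.mpr h) hterm1.transGen
  have hsub2 : ∀ a b, RelMod r2 sim a b → Relation.TransGen (RelMod r1 sim) a b := by
    rintro a b ⟨c, d, hac, hcd, hdb⟩
    exact tg_sim hsim (sim_tg hsim hac (hsub c d hcd)) hdb
  have wf2 : WellFounded (fun a b => RelMod r2 sim b a) :=
    Subrelation.wf (fun {a b} h => hsub2 b a h) wfTG
  have wf2' : WellFounded (fun a b => r2 b a) :=
    Subrelation.wf (fun {a b} h => ⟨b, a, hsim.refl b, h, hsim.refl a⟩) wf2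
  have wf1' : WellFounded (fun a b => r1 b a) :=
    Subrelation.wf (fun {a b} h => ⟨b, a, hsim.refl b, h, hsim.refl a⟩) hterm1
  have conv21 : ∀ a b, Conv r2 sim a b → Conv r1 sim a b := by
    intro a b h
    induction h with
    | refl => exact .refl
    | tail _ h2 ih =>
      refine ih.trans ?_
      rcases h2 with h | h | h
      · exact conv_of_tg_relmod (hsub _ _ h)
      · exact conv_symm hsim (conv_of_tg_relmod (hsub _ _ h))
      · exact conv_of_sim h
  have nfsim : ∀ a b, NF r1 a → NF r1 b → Conv r1 sim a b → sim a b := by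
    intro a b ha hb h
    obtain ⟨c, d, h1, h2, h3⟩ := hcr1 a b h
    rw [nf_eq_of_rtg h1 ha, nf_eq_of_rtg h3 hb] at h2
    exact h2
  have cr2 : ChurchRosserModulo r2 sim := by
    intro a b h
    obtain ⟨a', ha1, ha2⟩ := nf_exists wf2' a
    obtain ⟨b', hb1, hb2⟩ := nf_exists wf2' b
    have hc : Conv r1 sim a' b' :=
      ((conv_symm hsim (conv21 _ _ (conv_of_rtg ha1))).trans (conv21 _ _ h)).trans
        (conv21 _ _ (conv_of_rtg hb1))
    exact ⟨a', b', ha1, nfsim _ _ (hnf _ ha2) (hnf _ hb2) hc, hb1⟩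
  refine ⟨⟨wf2, cr2⟩, fun a b => ⟨?_, ?_⟩⟩
  · rintro ⟨c, h1, h2, h3⟩
    obtain ⟨c2, hc1, hc2⟩ := nf_exists wf2' a
    have hc : Conv r1 sim c2 c :=
      (conv_symm hsim (conv21 _ _ (conv_of_rtg hc1))).trans (conv_of_rtg h1)
    exact ⟨c2, hc1, hc2, hsim.trans (nfsim _ _ (hnf _ hc2) h2 hc) h3⟩
  · rintro ⟨c, h1, h2, h3⟩
    obtain ⟨c1, hc1, hc2⟩ := nf_exists wf1' a
    have hc : Conv r1 sim c1 c :=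
      (conv_symm hsim (conv_of_rtg hc1)).trans (conv21 _ _ (conv_of_rtg h1))
    exact ⟨c1, hc1, hc2, hsim.trans (nfsim _ _ hc2 (hnf _ h2) hc) h3⟩
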